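/- Let n ≥ 1, 1 ≤ m ≤ n, and p(z) = 1 − m^{m/2}·z_1⋯z_m. For r ∈ (0,1) let p_r(z) = p(rz) = 1 − m^{m/2} r^m z_1⋯z_m; p_r has no zeros on the closed unit ball, so p/p_r is holomorphic on a neighborhood of the closed unit ball. If α ≤ (2n + 1 − m)/2, then there exist C > 0 and r_0 ∈ (0,1) such that ‖p/p_r‖²_α ≤ C for all r ∈ (r_0, 1). -/

import Mathlib

open MeasureTheory
open scoped ENNReal Classical

noncomputable section

/-- The ambient space `ℂⁿ` with the Euclidean norm; the unit ball `𝔹ₙ` is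
`Metric.ball (0 : En n) 1` and the unit sphere `𝕊ₙ` is `Metric.sphere (0 : En n) 1`. -/
abbrev En (n : ℕ) := EuclideanSpace ℂ (Fin n)

/-- Lebesgue measure on `ℂⁿ`, transported along the definitional equality
`EuclideanSpace ℂ (Fin n) = (Fin n → ℂ)`. -/
noncomputable instance (n : ℕ) : MeasureSpace (En n) :=
  { volume := Measure.map (MeasurableEquiv.toLp 2 (Fin n → ℂ)) volume }

/-- `|k| = k₁ + … + kₙ` for a multi-index `k`. -/
def mOrd {n : ℕ} (k : Fin n → ℕ) : ℕ := ∑ i, k i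

/-- `k! = k₁! ⋯ kₙ!` for a multi-index `k`. -/
def mFact {n : ℕ} (k : Fin n → ℕ) : ℕ := ∏ i, (k i).factorial

/-- `z^k = z₁^{k₁} ⋯ zₙ^{kₙ}` for a multi-index `k`. -/
def mPow {n : ℕ} (z : En n) (k : Fin n → ℕ) : ℂ := ∏ i, z i ^ k i

/-- The weight `(n+|k|)^α · (n-1)!·k! / (n-1+|k|)!` appearing in the Dirichlet-type norm. -/
def dWeight (n : ℕ) (α : ℝ) (k : Fin n → ℕ) : ℝ :=
  ((n : ℝ) + mOrd k) ^ α * (((n - 1).factorial * mFact k : ℕ) : ℝ) /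
    (((n - 1 + mOrd k).factorial : ℕ) : ℝ)

/-- The squared Dirichlet-type norm `‖·‖²_α` of a family of Taylor coefficients,
valued in `[0,∞]`. -/
def Dnorm2 (n : ℕ) (α : ℝ) (a : (Fin n → ℕ) → ℂ) : ℝ≥0∞ :=
  ∑' k : Fin n → ℕ, ENNReal.ofReal (dWeight n α k * ‖a k‖ ^ 2)

/-- `a` is the family of power-series (Taylor) coefficients of `f` on the unit ball:
`f z = Σ_k a_k z^k` for every `z` in the ball. -/
def HasCoeffs (n : ℕ) (f : En n → ℂ) (a : (Fin n → ℕ) → ℂ) : Prop :=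
  ∀ z ∈ Metric.ball (0 : En n) 1, HasSum (fun k => a k * mPow z k) (f z)

/-- The squared Dirichlet-type norm `‖f‖²_α` of a function, computed through its
power-series coefficients (which are unique when they exist). -/
def DnormF2 (n : ℕ) (α : ℝ) (f : En n → ℂ) : ℝ≥0∞ :=
  sInf {x | ∃ a, HasCoeffs n f a ∧ x = Dnorm2 n α a}

/-- Membership in the Dirichlet-type space `D_α(𝔹ₙ)`. -/
def MemD (n : ℕ) (α : ℝ) (f : En n → ℂ) : Prop :=
  DifferentiableOn ℂ f (Metric.ball 0 1) ∧ ∃ a, HasCoeffs n f a ∧ Dnorm2 n α a < ⊤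

/-- `f` is a cyclic vector of `D_α(𝔹ₙ)`: for every `ε > 0` there is a polynomial `q`
with `‖q·f - 1‖²_α < ε`. -/
def CyclicD (n : ℕ) (α : ℝ) (f : En n → ℂ) : Prop :=
  ∀ ε : ℝ, 0 < ε → ∃ q : MvPolynomial (Fin n) ℂ,
    DnormF2 n α (fun z => MvPolynomial.eval (fun i => z i) q * f z - 1) < ENNReal.ofReal ε

/-- The model polynomial `p(z) = 1 - m^{m/2}·z₁ z₂ ⋯ z_m`, as a function on `ℂⁿ`. -/
def modelP (n m : ℕ) (hmn : m ≤ n) : En n → ℂ :=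
  fun z => 1 - ((((m : ℝ) ^ ((m : ℝ) / 2) : ℝ)) : ℂ) * ∏ i : Fin m, z (Fin.castLE hmn i)

/-
Write `w = z₁ ⋯ z_m` and `T = m^{m/2}`. Then `p / p_r = (1 - T w) / (1 - T rᵐ w)
= 1 + Σ_{j ≥ 1} (T rᵐ - T) (T rᵐ)^{j-1} wʲ`, which converges on the ball because AM-GM gives
`T |w| < 1` there. So only the multi-indices `(j, …, j, 0, …, 0)` occur, with squared coefficient
`m^{mj} r^{2m(j-1)} (1 - rᵐ)²`. Stirling's formula bounds the weight of such a multi-index times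
`m^{mj}` by `j^{α + (m-1)/2 - (n-1)}`, which is at most `j` precisely when `α ≤ (2n+1-m)/2`.
With `x = r^{2m}` the norm is then at most `n^α + K (1 - rᵐ)² Σ_j j x^{j-1}`, and
`(1 - rᵐ)² ≤ (1 - x)² = (Σ_j j x^{j-1})⁻¹`.
-/

namespace DirichletModel

open Real Finset Function

section MultiIndex

variable {n m : ℕ}

/-- The multi-index `(j, …, j, 0, …, 0)` with `m` entries `j`: a function of `z₁ ⋯ z_m` has its
Taylor coefficients supported on these. -/
def diagIdx (n m j : ℕ) : Fin n → ℕ := fun i => if (i : ℕ) < m then j else 0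

@[to_additive]
lemma prod_ite_lt_eq_prod_castLE {M : Type*} [CommMonoid M] (hmn : m ≤ n) (f : Fin n → M) :
    ∏ i : Fin n, (if (i : ℕ) < m then f i else 1) = ∏ i : Fin m, f (Fin.castLE hmn i) := by
  have hfilter : ({i : Fin n | (i : ℕ) < m} : Finset (Fin n)) =
      univ.map (Fin.castLEEmb hmn) := by
    ext i
    simp only [mem_filter, mem_univ, true_and, mem_map, Fin.castLEEmb_apply]
    exact ⟨fun h => ⟨⟨i, h⟩, rfl⟩, by rintro ⟨a, rfl⟩; exact a.isLt⟩
  rw [← prod_filter, hfilter, prod_map]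
  rfl

lemma mOrd_diagIdx (hmn : m ≤ n) (j : ℕ) : mOrd (diagIdx n m j) = m * j := by
  simp [mOrd, diagIdx, sum_ite_lt_eq_sum_castLE hmn (fun _ => j)]

lemma mFact_diagIdx (hmn : m ≤ n) (j : ℕ) : mFact (diagIdx n m j) = j.factorial ^ m := by
  simp only [mFact, diagIdx, apply_ite Nat.factorial, Nat.factorial_zero]
  simp [prod_ite_lt_eq_prod_castLE hmn (fun _ => j.factorial)]

lemma mPow_diagIdx (hmn : m ≤ n) (z : En n) (j : ℕ) :
    mPow z (diagIdx n m j) = (∏ i : Fin m, z (Fin.castLE hmn i)) ^ j := by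
  simp only [mPow, diagIdx, pow_ite, pow_zero]
  rw [prod_ite_lt_eq_prod_castLE hmn (fun i => z i ^ j), prod_pow]

lemma diagIdx_injective (hm : 1 ≤ m) (hmn : m ≤ n) : Injective (diagIdx n m) := by
  intro j k h
  simpa [diagIdx, show 0 < m from hm] using congrFun h ⟨0, by omega⟩

lemma dWeight_diagIdx (hmn : m ≤ n) (α : ℝ) (j : ℕ) :
    dWeight n α (diagIdx n m j) =
      ((n : ℝ) + m * j) ^ α * ((n - 1).factorial * (j.factorial : ℝ) ^ m) /
        (n - 1 + m * j).factorial := by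
  simp [dWeight, mOrd_diagIdx hmn, mFact_diagIdx hmn]

end MultiIndex

lemma card_pow_mul_prod_le_sum_pow {ι : Type*} (s : Finset ι) {q : ι → ℝ}
    (hq : ∀ i ∈ s, 0 ≤ q i) : (#s : ℝ) ^ #s * ∏ i ∈ s, q i ≤ (∑ i ∈ s, q i) ^ #s := by
  rcases s.eq_empty_or_nonempty with rfl | hs
  · simp
  have hcard : (0 : ℝ) < #s := by exact_mod_cast hs.card_pos
  have hamgm := geom_mean_le_arith_mean s (fun _ => 1) q (fun _ _ => zero_le_one)
    (by simpa using hcard) hq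
  simp only [rpow_one, sum_const, nsmul_eq_mul, mul_one, one_mul] at hamgm
  calc (#s : ℝ) ^ #s * ∏ i ∈ s, q i
      = (#s : ℝ) ^ #s * ((∏ i ∈ s, q i) ^ (#s : ℝ)⁻¹) ^ #s := by
        rw [rpow_inv_natCast_pow (prod_nonneg hq) hs.card_pos.ne']
    _ ≤ (#s : ℝ) ^ #s * ((∑ i ∈ s, q i) / #s) ^ #s := by
        gcongr
        exact rpow_nonneg (prod_nonneg hq) _
    _ = (∑ i ∈ s, q i) ^ #s := by rw [← mul_pow, mul_div_cancel₀ _ hcard.ne']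

lemma pow_mul_norm_prod_castLE_sq_le {n m : ℕ} (hmn : m ≤ n) (z : En n) :
    (m : ℝ) ^ m * ‖∏ i : Fin m, z (Fin.castLE hmn i)‖ ^ 2 ≤ ‖z‖ ^ (2 * m) := by
  have hpart : ∑ i : Fin m, ‖z (Fin.castLE hmn i)‖ ^ 2 ≤ ‖z‖ ^ 2 := by
    rw [EuclideanSpace.norm_sq_eq, ← sum_ite_lt_eq_sum_castLE hmn (fun i => ‖z i‖ ^ 2)]
    exact sum_le_sum fun i _ => by split_ifs <;> simp
  have hamgm := card_pow_mul_prod_le_sum_pow (univ : Finset (Fin m))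
    (q := fun i => ‖z (Fin.castLE hmn i)‖ ^ 2) (fun _ _ => by positivity)
  simp only [card_univ, Fintype.card_fin] at hamgm
  rw [norm_prod, ← prod_pow, pow_mul]
  exact hamgm.trans (pow_le_pow_left₀ (by positivity) hpart m)

def quotCoeff {R : Type*} [Ring R] (a b : R) : ℕ → R
  | 0 => 1
  | j + 1 => (b - a) * b ^ j

lemma hasSum_quotCoeff_mul_pow {𝕜 : Type*} [NormedField 𝕜] [CompleteSpace 𝕜] {a b w : 𝕜}
    (h : ‖b * w‖ < 1) :
    HasSum (fun j => quotCoeff a b j * w ^ j) ((1 - a * w) / (1 - b * w)) := by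
  have hne : 1 - b * w ≠ 0 := fun h0 => by
    rw [← sub_eq_zero.mp h0, norm_one] at h
    exact lt_irrefl _ h
  have htail : HasSum (fun j => quotCoeff a b (j + 1) * w ^ (j + 1))
      ((b - a) * w * (1 - b * w)⁻¹) := by
    refine ((hasSum_geometric_of_norm_lt_one h).mul_left ((b - a) * w)).congr_fun fun j => ?_
    show (b - a) * b ^ j * w ^ (j + 1) = _
    ring
  have hsum : quotCoeff a b 0 * w ^ 0 + (b - a) * w * (1 - b * w)⁻¹ =
      (1 - a * w) / (1 - b * w) := by
    rw [eq_div_iff hne, add_mul, inv_mul_cancel_right₀ hne]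
    show 1 * w ^ 0 * (1 - b * w) + (b - a) * w = 1 - a * w
    ring
  exact hsum ▸ htail.zero_add (f := fun j => quotCoeff a b j * w ^ j)

lemma hasCoeffs_extend_iff {n : ℕ} {ι : Type*} {g : ι → Fin n → ℕ} (hg : Injective g)
    (f : En n → ℂ) (c : ι → ℂ) :
    HasCoeffs n f (extend g c 0) ↔
      ∀ z ∈ Metric.ball (0 : En n) 1, HasSum (fun i => c i * mPow z (g i)) (f z) := by
  refine forall₂_congr fun z _ => ?_
  rw [← hg.hasSum_iff fun k hk => by rw [extend_apply' _ _ _ (by simpa using hk)]; simp]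
  simp [Function.comp_def, hg.extend_apply]

lemma Dnorm2_extend {n : ℕ} (α : ℝ) {ι : Type*} {g : ι → Fin n → ℕ} (hg : Injective g)
    (c : ι → ℂ) :
    Dnorm2 n α (extend g c 0) = ∑' i, ENNReal.ofReal (dWeight n α (g i) * ‖c i‖ ^ 2) := by
  rw [Dnorm2, ← hg.tsum_eq fun k hk => ?_]
  · simp [hg.extend_apply]
  · by_contra hkg
    simp [extend_apply' _ _ _ (by simpa using hkg)] at hk

section Model

variable {n m : ℕ}

def modelConst (m : ℕ) : ℝ := (m : ℝ) ^ ((m : ℝ) / 2)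

lemma modelConst_nonneg (m : ℕ) : 0 ≤ modelConst m := by unfold modelConst; positivity

lemma modelConst_sq (m : ℕ) : modelConst m ^ 2 = (m : ℝ) ^ m := by
  rw [modelConst, ← rpow_natCast, ← rpow_mul (Nat.cast_nonneg m), ← rpow_natCast]
  ring_nf

lemma modelConst_mul_norm_prod_castLE_lt (hm : 1 ≤ m) (hmn : m ≤ n) {z : En n}
    (hz : ‖z‖ < 1) : modelConst m * ‖∏ i : Fin m, z (Fin.castLE hmn i)‖ < 1 := by
  have hsq : (modelConst m * ‖∏ i : Fin m, z (Fin.castLE hmn i)‖) ^ 2 < 1 := by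
    rw [mul_pow, modelConst_sq]
    exact (pow_mul_norm_prod_castLE_sq_le hmn z).trans_lt
      (pow_lt_one₀ (norm_nonneg z) hz (by omega))
  exact (pow_lt_one_iff_of_nonneg (mul_nonneg (modelConst_nonneg m) (norm_nonneg _))
    two_ne_zero).mp hsq

lemma modelP_smul (hmn : m ≤ n) (r : ℝ) (z : En n) :
    modelP n m hmn ((r : ℂ) • z) =
      1 - ((modelConst m * r ^ m : ℝ) : ℂ) * ∏ i : Fin m, z (Fin.castLE hmn i) := by
  simp only [modelP, modelConst, PiLp.smul_apply, smul_eq_mul, prod_mul_distrib, prod_const,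
    card_univ, Fintype.card_fin]
  push_cast
  ring

lemma hasCoeffs_modelP_div_modelP_smul (hm : 1 ≤ m) (hmn : m ≤ n) {r : ℝ} (hr : |r| ≤ 1) :
    HasCoeffs n (fun z => modelP n m hmn z / modelP n m hmn ((r : ℂ) • z))
      (extend (diagIdx n m) (quotCoeff (modelConst m : ℂ) (modelConst m * r ^ m : ℝ)) 0) := by
  rw [hasCoeffs_extend_iff (diagIdx_injective hm hmn)]
  intro z hz
  simp only [mPow_diagIdx hmn, modelP_smul]
  apply hasSum_quotCoeff_mul_pow
  rw [norm_mul, Complex.norm_real, norm_mul, norm_pow, Real.norm_eq_abs, Real.norm_eq_abs,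
    abs_of_nonneg (modelConst_nonneg m)]
  calc modelConst m * |r| ^ m * ‖∏ i : Fin m, z (Fin.castLE hmn i)‖
      ≤ modelConst m * ‖∏ i : Fin m, z (Fin.castLE hmn i)‖ := by
        gcongr
        exact mul_le_of_le_one_right (modelConst_nonneg m) (pow_le_one₀ (abs_nonneg r) hr)
    _ < 1 := modelConst_mul_norm_prod_castLE_lt hm hmn (mem_ball_zero_iff.mp hz)

end Model

lemma factorial_le_exp_one_mul_sqrt_mul_pow {j : ℕ} (hj : j ≠ 0) :
    (j.factorial : ℝ) ≤ exp 1 * √j * (j / exp 1) ^ j := by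
  obtain ⟨i, rfl⟩ := Nat.exists_eq_succ_of_ne_zero hj
  have hle : Stirling.stirlingSeq (i + 1) ≤ Stirling.stirlingSeq 1 :=
    Stirling.stirlingSeq'_antitone (Nat.zero_le i)
  rw [Stirling.stirlingSeq_one, Stirling.stirlingSeq, div_le_iff₀ (by positivity)] at hle
  calc ((i + 1).factorial : ℝ)
      ≤ exp 1 / √2 * (√(2 * (i + 1 : ℕ)) * ((i + 1 : ℕ) / exp 1) ^ (i + 1)) := hle
    _ = exp 1 * √(i + 1 : ℕ) * ((i + 1 : ℕ) / exp 1) ^ (i + 1) := by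
        rw [sqrt_mul zero_le_two]
        field_simp

/-- Stirling's bound on the multinomial coefficient: `(mj)! / (j!)^m ≳ m^{mj} j^{-(m-1)/2}`. -/
lemma sqrt_mul_factorial_pow_mul_pow_le (m j : ℕ) :
    √(2 * π * (m * j)) * (j.factorial : ℝ) ^ m * (m : ℝ) ^ (m * j) ≤
      (exp 1 * √j) ^ m * (m * j).factorial := by
  rcases eq_or_ne j 0 with rfl | hj
  · simp
  have hlower := Stirling.le_factorial_stirling (m * j)
  push_cast at hlower
  calc √(2 * π * (m * j)) * (j.factorial : ℝ) ^ m * (m : ℝ) ^ (m * j)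
      ≤ √(2 * π * (m * j)) * (exp 1 * √j * (j / exp 1) ^ j) ^ m * (m : ℝ) ^ (m * j) := by
        gcongr
        exact factorial_le_exp_one_mul_sqrt_mul_pow hj
    _ = (exp 1 * √j) ^ m * (√(2 * π * (m * j)) * (m * j / exp 1) ^ (m * j)) := by
        rw [mul_pow (exp 1 * √j), ← pow_mul, mul_div_assoc, mul_pow (m : ℝ), mul_comm j m]
        ring
    _ ≤ (exp 1 * √j) ^ m * (m * j).factorial := by gcongr

section Weight

variable {n m : ℕ}

lemma factorial_mul_pow_le_factorial_add (hm : 1 ≤ m) (j k : ℕ) :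
    (m * j).factorial * j ^ k ≤ (k + m * j).factorial := by
  calc (m * j).factorial * j ^ k ≤ (m * j).factorial * (m * j + 1) ^ k := by
        gcongr
        nlinarith
    _ ≤ (k + m * j).factorial := add_comm k (m * j) ▸ Nat.factorial_mul_pow_le_factorial

lemma rpow_mul_sqrt_pow {x : ℝ} (hx : 0 < x) (hn : 1 ≤ n) :
    x ^ ((2 * (n : ℝ) + 1 - m) / 2) * √x ^ m = √x * x * x ^ (n - 1) := by
  calc x ^ ((2 * (n : ℝ) + 1 - m) / 2) * √x ^ m
      = x ^ ((2 * (n : ℝ) + 1 - m) / 2) * x ^ ((m : ℝ) / 2) := by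
        rw [sqrt_eq_rpow, ← rpow_natCast, ← rpow_mul hx.le]
        ring_nf
    _ = x ^ ((1 / 2 : ℝ) + 1 + ((n - 1 : ℕ) : ℝ)) := by
        rw [← rpow_add hx]
        congr 1
        push_cast [Nat.cast_sub hn]
        ring
    _ = √x * x * x ^ (n - 1) := by
        rw [rpow_add hx, rpow_add hx, rpow_one, rpow_natCast, sqrt_eq_rpow]

lemma rpow_add_mul_le_rpow_mul_rpow {a b x α β : ℝ} (ha : 1 ≤ a) (hb : 0 ≤ b) (hx : 1 ≤ x)
    (hαβ : α ≤ β) (hβ : 0 ≤ β) : (a + b * x) ^ α ≤ (a + b) ^ β * x ^ β := by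
  rw [← mul_rpow (by positivity) (by positivity)]
  calc (a + b * x) ^ α ≤ (a + b * x) ^ β := rpow_le_rpow_of_exponent_le (by nlinarith) hαβ
    _ ≤ ((a + b) * x) ^ β := rpow_le_rpow (by positivity) (by nlinarith) hβ

lemma exists_dWeight_diagIdx_mul_pow_le (hm : 1 ≤ m) (hmn : m ≤ n) {α : ℝ}
    (hα : α ≤ (2 * (n : ℝ) + 1 - m) / 2) :
    ∃ K : ℝ, 0 ≤ K ∧ ∀ j : ℕ, j ≠ 0 →
      dWeight n α (diagIdx n m j) * (m : ℝ) ^ (m * j) ≤ K * j := by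
  set α' : ℝ := (2 * (n : ℝ) + 1 - m) / 2
  have hn : 1 ≤ n := hm.trans hmn
  have hα' : 0 ≤ α' := by
    have : (m : ℝ) ≤ n := by exact_mod_cast hmn
    simp only [α']
    linarith
  set c : ℝ := ((n : ℝ) + m) ^ α' * (n - 1).factorial * exp 1 ^ m
  refine ⟨c / √(2 * π), by positivity, fun j hj => ?_⟩
  have hj1 : (1 : ℝ) ≤ j := by exact_mod_cast Nat.one_le_iff_ne_zero.mpr hj
  have hm1 : (1 : ℝ) ≤ m := by exact_mod_cast hm
  have hpow : ((n : ℝ) + m * j) ^ α ≤ ((n : ℝ) + m) ^ α' * (j : ℝ) ^ α' :=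
    rpow_add_mul_le_rpow_mul_rpow (by exact_mod_cast hn) (by positivity) hj1 hα hα'
  have hfact : ((m * j).factorial : ℝ) * (j : ℝ) ^ (n - 1) ≤ (n - 1 + m * j).factorial := by
    exact_mod_cast factorial_mul_pow_le_factorial_add hm j (n - 1)
  have hsqrt : √(2 * π) * √j ≤ √(2 * π * (m * j)) := by
    rw [← sqrt_mul (by positivity)]
    gcongr
    nlinarith
  rw [dWeight_diagIdx hmn, div_mul_eq_mul_div, div_le_iff₀ (by positivity)]
  refine le_of_mul_le_mul_left ?_ (show 0 < √(2 * π) * √j by positivity)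
  calc √(2 * π) * √j * (((n : ℝ) + m * j) ^ α * ((n - 1).factorial * (j.factorial : ℝ) ^ m) *
        (m : ℝ) ^ (m * j))
      = ((n : ℝ) + m * j) ^ α * (n - 1).factorial *
        (√(2 * π) * √j * (j.factorial : ℝ) ^ m * (m : ℝ) ^ (m * j)) := by ring
    _ ≤ ((n : ℝ) + m) ^ α' * (j : ℝ) ^ α' * (n - 1).factorial *
        (√(2 * π * (m * j)) * (j.factorial : ℝ) ^ m * (m : ℝ) ^ (m * j)) := by gcongr
    _ ≤ ((n : ℝ) + m) ^ α' * (j : ℝ) ^ α' * (n - 1).factorial *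
        ((exp 1 * √j) ^ m * (m * j).factorial) :=
        mul_le_mul_of_nonneg_left (sqrt_mul_factorial_pow_mul_pow_le m j) (by positivity)
    _ = c * ((j : ℝ) ^ α' * √j ^ m) * (m * j).factorial := by
        simp only [c]
        ring
    _ = c * √j * j * ((m * j).factorial * (j : ℝ) ^ (n - 1)) := by
        rw [rpow_mul_sqrt_pow (by positivity) hn]
        ring
    _ ≤ c * √j * j * (n - 1 + m * j).factorial := by gcongr
    _ = √(2 * π) * √j * (c / √(2 * π) * j * (n - 1 + m * j).factorial) := by field_simp

end Weight

lemma tsum_ofReal_le_of_le_succ_mul_geometric {f : ℕ → ℝ} {K x : ℝ} (hK : 0 ≤ K) (hx0 : 0 ≤ x)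
    (hx1 : x < 1) (hf : ∀ j, f j ≤ K * ((j + 1) * x ^ j) * (1 - x) ^ 2) :
    ∑' j, ENNReal.ofReal (f j) ≤ ENNReal.ofReal K := by
  have hgeom : HasSum (fun j : ℕ => K * ((j + 1) * x ^ j) * (1 - x) ^ 2) K := by
    have h := hasSum_choose_mul_geometric_of_norm_lt_one 1 (r := x)
      (by rwa [norm_of_nonneg hx0])
    simp only [Nat.choose_one_right, Nat.cast_add, Nat.cast_one] at h
    convert (h.mul_left K).mul_right ((1 - x) ^ 2) using 1
    · rfl
    · field_simp [(sub_pos.mpr hx1).ne']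
  calc ∑' j, ENNReal.ofReal (f j)
      ≤ ∑' j : ℕ, ENNReal.ofReal (K * ((j + 1) * x ^ j) * (1 - x) ^ 2) :=
        ENNReal.tsum_le_tsum fun j => ENNReal.ofReal_le_ofReal (hf j)
    _ = ENNReal.ofReal K := by
        rw [← ENNReal.ofReal_tsum_of_nonneg (fun j => by positivity) hgeom.summable,
          hgeom.tsum_eq]

lemma norm_quotCoeff_succ_sq (T s : ℝ) (j : ℕ) :
    ‖quotCoeff (T : ℂ) ((T * s : ℝ) : ℂ) (j + 1)‖ ^ 2 =
      (T ^ 2) ^ (j + 1) * (1 - s) ^ 2 * (s ^ 2) ^ j := by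
  show ‖(((T * s : ℝ) : ℂ) - T) * ((T * s : ℝ) : ℂ) ^ j‖ ^ 2 = _
  rw [← Complex.ofReal_sub, ← Complex.ofReal_pow, ← Complex.ofReal_mul, Complex.norm_real,
    Real.norm_eq_abs, sq_abs]
  ring

lemma tsum_dWeight_diagIdx_mul_norm_quotCoeff_sq_le {n m : ℕ} (hm : 1 ≤ m) (hmn : m ≤ n)
    {α K : ℝ} (hK : 0 ≤ K)
    (hKj : ∀ j : ℕ, j ≠ 0 → dWeight n α (diagIdx n m j) * (m : ℝ) ^ (m * j) ≤ K * j)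
    {r : ℝ} (hr0 : 0 ≤ r) (hr1 : r < 1) :
    ∑' j, ENNReal.ofReal (dWeight n α (diagIdx n m j) *
        ‖quotCoeff (modelConst m : ℂ) ((modelConst m * r ^ m : ℝ) : ℂ) j‖ ^ 2) ≤
      ENNReal.ofReal ((n : ℝ) ^ α + K) := by
  have hs0 : 0 ≤ r ^ m := pow_nonneg hr0 m
  have hs1 : r ^ m ≤ 1 := pow_le_one₀ hr0 hr1.le
  have hx1 : (r ^ m) ^ 2 < 1 := pow_lt_one₀ hs0 (pow_lt_one₀ hr0 hr1 (by omega)) two_ne_zero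
  rw [tsum_eq_zero_add' ENNReal.summable, ENNReal.ofReal_add (by positivity) hK]
  gcongr
  · simp [dWeight_diagIdx hmn, quotCoeff, Nat.factorial_ne_zero]
  refine tsum_ofReal_le_of_le_succ_mul_geometric hK (by positivity) hx1 fun j => ?_
  rw [norm_quotCoeff_succ_sq, modelConst_sq, ← pow_mul]
  calc dWeight n α (diagIdx n m (j + 1)) *
        ((m : ℝ) ^ (m * (j + 1)) * (1 - r ^ m) ^ 2 * ((r ^ m) ^ 2) ^ j)
      = dWeight n α (diagIdx n m (j + 1)) * (m : ℝ) ^ (m * (j + 1)) *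
        (((r ^ m) ^ 2) ^ j * (1 - r ^ m) ^ 2) := by ring
    _ ≤ K * (j + 1 : ℕ) * (((r ^ m) ^ 2) ^ j * (1 - (r ^ m) ^ 2) ^ 2) := by
        refine mul_le_mul (hKj _ j.succ_ne_zero) ?_ (by positivity) (by positivity)
        gcongr
        nlinarith
    _ = K * ((j + 1) * ((r ^ m) ^ 2) ^ j) * (1 - (r ^ m) ^ 2) ^ 2 := by push_cast; ring

end DirichletModel

open DirichletModel

theorem stmt_11_general (n m : ℕ) (hm : 1 ≤ m) (hmn : m ≤ n) (α : ℝ)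
    (hα : α ≤ (2 * (n : ℝ) + 1 - m) / 2) :
    ∃ C : ℝ, 0 < C ∧ ∃ r₀ ∈ Set.Ioo (0 : ℝ) 1, ∀ r ∈ Set.Ioo r₀ 1,
      DnormF2 n α (fun z => modelP n m hmn z / modelP n m hmn ((r : ℂ) • z)) ≤
        ENNReal.ofReal C := by
  obtain ⟨K, hK, hKj⟩ := exists_dWeight_diagIdx_mul_pow_le hm hmn hα
  have hn : 0 < n := hm.trans hmn
  refine ⟨(n : ℝ) ^ α + K, by positivity, 1 / 2, by norm_num, fun r hr => ?_⟩
  have hr0 : 0 ≤ r := by linarith [hr.1]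
  calc DnormF2 n α (fun z => modelP n m hmn z / modelP n m hmn ((r : ℂ) • z))
      ≤ Dnorm2 n α (Function.extend (diagIdx n m)
          (quotCoeff (modelConst m : ℂ) ((modelConst m * r ^ m : ℝ) : ℂ)) 0) :=
        sInf_le ⟨_, hasCoeffs_modelP_div_modelP_smul hm hmn (abs_le.mpr ⟨by linarith, hr.2.le⟩),
          rfl⟩
    _ = _ := Dnorm2_extend α (diagIdx_injective hm hmn) _
    _ ≤ ENNReal.ofReal ((n : ℝ) ^ α + K) :=
        tsum_dWeight_diagIdx_mul_norm_quotCoeff_sq_le hm hmn hK hKj hr0 hr.2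

/-- for the model polynomial `p(z) = 1 - m^{m/2} z₁⋯z_m` and its radial
dilations `p_r(z) = p(rz)`, if `α ≤ (2n+1-m)/2` then `‖p/p_r‖²_α` stays bounded as
`r → 1⁻`. -/
theorem stmt_11 (n m : ℕ) (hn : 1 ≤ n) (hm : 1 ≤ m) (hmn : m ≤ n) (α : ℝ)
    (hα : α ≤ (2 * (n : ℝ) + 1 - m) / 2) :
    ∃ C : ℝ, 0 < C ∧ ∃ r₀ ∈ Set.Ioo (0 : ℝ) 1, ∀ r ∈ Set.Ioo r₀ 1,
      DnormF2 n α (fun z => modelP n m hmn z / modelP n m hmn ((r : ℂ) • z)) ≤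
        ENNReal.ofReal C :=
  stmt_11_general n m hm hmn α hα
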